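/- arXiv:1402.5705 — 2 statements merged into one kernel-verified Lean document; each statement's English description precedes it below -/
import Mathlib

section
/- For each a ∈ {1, 2, 3}, the subspace H is invariant under θ_a and θ_a² X = X for all X ∈ H; consequently the restriction θ_a|_H is a symmetric involution whose only possible eigenvalues are 1 and −1, and H is the orthogonal direct sum of the eigenspaces H_a(1) and H_a(−1). -/
open RealInnerProductSpace

/-- An almost contact metric structure `(φ, ξ, η)` together with an almost contact metric
3-structure `(φ_a, ξ_a, η_a)`, `a ∈ {1,2,3}` (indices mod 3), on a real inner product space `V`,
modelling the structures induced on the tangent space of a real hypersurface in the complex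
two-plane Grassmannian `G₂(ℂ^{m+2})` by the Kaehler structure `J` and the quaternionic Kaehler
structure `𝔍`.  Here `η(X) = ⟪ξ, X⟫` and `η_a(X) = ⟪ξ_a, X⟫` are written out via the inner
product. -/
structure ACMS3 (V : Type*) [NormedAddCommGroup V] [InnerProductSpace ℝ V] where
  phi : V →ₗ[ℝ] V
  xi : V
  phiA : Fin 3 → V →ₗ[ℝ] V
  xiA : Fin 3 → V
  xi_unit : ‖xi‖ = 1
  phi_sq : ∀ X : V, phi (phi X) = -X + ⟪xi, X⟫ • xi
  phi_xi : phi xi = 0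
  phi_metric : ∀ X Y : V, ⟪phi X, phi Y⟫ = ⟪X, Y⟫ - ⟪xi, X⟫ * ⟪xi, Y⟫
  xiA_unit : ∀ a, ‖xiA a‖ = 1
  phiA_sq : ∀ a (X : V), phiA a (phiA a X) = -X + ⟪xiA a, X⟫ • xiA a
  phiA_xiA : ∀ a, phiA a (xiA a) = 0
  phiA_metric : ∀ a (X Y : V),
    ⟪phiA a X, phiA a Y⟫ = ⟪X, Y⟫ - ⟪xiA a, X⟫ * ⟪xiA a, Y⟫
  quat1 : ∀ a (X : V), phiA a (phiA (a + 1) X) - ⟪xiA (a + 1), X⟫ • xiA a = phiA (a + 2) X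
  quat2 : ∀ a (X : V),
    phiA (a + 2) X = -(phiA (a + 1) (phiA a X)) + ⟪xiA a, X⟫ • xiA (a + 1)
  quat_xi1 : ∀ a, phiA a (xiA (a + 1)) = xiA (a + 2)
  quat_xi2 : ∀ a, xiA (a + 2) = -(phiA (a + 1) (xiA a))
  rel : ∀ a (X : V), phiA a (phi X) - ⟪xi, X⟫ • xiA a = phi (phiA a X) - ⟪xiA a, X⟫ • xi
  rel_xi : ∀ a, phi (xiA a) = phiA a xi

variable {V : Type*} [NormedAddCommGroup V] [InnerProductSpace ℝ V]

/-- The endomorphism `θ_a X := φ_a φ X − η(X) ξ_a`. -/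
noncomputable def ACMS3.theta (S : ACMS3 V) (a : Fin 3) : V →ₗ[ℝ] V where
  toFun X := S.phiA a (S.phi X) - ⟪S.xi, X⟫ • S.xiA a
  map_add' X Y := by
    simp only [map_add, inner_add_right, add_smul]
    abel
  map_smul' r X := by
    simp only [map_smul, inner_smul_right, RingHom.id_apply, smul_sub, smul_smul]

/-- `H^⊥ = span{ξ, ξ₁, ξ₂, ξ₃, φξ₁, φξ₂, φξ₃}`. -/
noncomputable def ACMS3.Hperp (S : ACMS3 V) : Submodule ℝ V :=
  Submodule.span ℝ {S.xi, S.xiA 0, S.xiA 1, S.xiA 2,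
    S.phi (S.xiA 0), S.phi (S.xiA 1), S.phi (S.xiA 2)}

/-- `H` is the orthogonal complement of `H^⊥` in `V`. -/
noncomputable def ACMS3.H (S : ACMS3 V) : Submodule ℝ V := S.Hperpᗮ

/-- `H_a(ε)`, the eigenspace of `θ_a` restricted to `H` corresponding to the eigenvalue `ε`. -/
noncomputable def ACMS3.eigenH (S : ACMS3 V) (a : Fin 3) (ε : ℝ) : Submodule ℝ V :=
  S.H ⊓ Module.End.eigenspace (S.theta a) ε

/-- The normal Jacobi operator
`R̂_N X = X + 3η(X)ξ + Σ_a (3η_a(X)ξ_a − η(ξ_a)θ_a X + η_a(φX)φξ_a)`. -/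
noncomputable def ACMS3.jacobi (S : ACMS3 V) (X : V) : V :=
  X + (3 * ⟪S.xi, X⟫) • S.xi +
    ∑ a : Fin 3, ((3 * ⟪S.xiA a, X⟫) • S.xiA a
      - ⟪S.xi, S.xiA a⟫ • S.theta a X
      + ⟪S.xiA a, S.phi X⟫ • S.phi (S.xiA a))

/-!
The relation `φ_a φ − ξ_a ⊗ η = φ φ_a − ξ ⊗ η_a` gives two expressions for `θ_a`, and the
skew-symmetry of `φ` and `φ_a` makes each the adjoint of the other, so `θ_a` is symmetric on all
of `V`. It maps the generators of `H^⊥` into `H^⊥`, hence preserves `H = (H^⊥)ᗮ`. For `X ∈ H`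
the correction terms vanish and `θ_a² X = φ φ_a φ_a φ X = −φ² X = X`. The rest is linear
algebra of a symmetric involution, with `X = ½(X + θ_a X) + ½(X − θ_a X)`.
-/

section Involution

variable {K M : Type*} [Field K] [AddCommGroup M] [Module K M] {T : Module.End K M}

theorem Module.End.eq_one_or_eq_neg_one_of_apply_apply_eq_self {x : M} {ε : K}
    (hTT : T (T x) = x) (hx : x ≠ 0) (hε : T x = ε • x) : ε = 1 ∨ ε = -1 := by
  rw [hε, map_smul, hε, smul_smul] at hTT
  have h : (ε * ε - 1) • x = 0 := by rw [sub_smul, one_smul, hTT, sub_self]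
  exact mul_self_eq_one_iff.mp (sub_eq_zero.mp ((smul_eq_zero.mp h).resolve_right hx))

theorem Module.End.inf_eigenspace_one_sup_inf_eigenspace_neg_one [NeZero (2 : K)]
    {W : Submodule K M} (hW : Set.MapsTo T W W) (hTT : ∀ x ∈ W, T (T x) = x) :
    W ⊓ eigenspace T 1 ⊔ W ⊓ eigenspace T (-1) = W := by
  refine le_antisymm (sup_le inf_le_left inf_le_left) fun x hx => ?_
  have hTx : T x ∈ W := hW hx
  refine Submodule.mem_sup.mpr ⟨(2⁻¹ : K) • (x + T x), Submodule.mem_inf.mpr ⟨?_, ?_⟩,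
    (2⁻¹ : K) • (x - T x), Submodule.mem_inf.mpr ⟨?_, ?_⟩, ?_⟩
  · exact W.smul_mem _ (W.add_mem hx hTx)
  · rw [mem_eigenspace_iff, map_smul, map_add, hTT x hx, add_comm, one_smul]
  · exact W.smul_mem _ (W.sub_mem hx hTx)
  · rw [mem_eigenspace_iff, map_smul, map_sub, hTT x hx, neg_one_smul, ← smul_neg, neg_sub]
  · rw [← smul_add, add_add_sub_cancel, ← two_smul K, smul_smul,
      inv_mul_cancel₀ two_ne_zero, one_smul]

end Involution

theorem LinearMap.IsSymmetric.mapsTo_orthogonal {𝕜 E : Type*} [RCLike 𝕜] [NormedAddCommGroup E]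
    [InnerProductSpace 𝕜 E] {T : E →ₗ[𝕜] E} (hT : T.IsSymmetric) {K : Submodule 𝕜 E}
    (hK : Set.MapsTo T K K) : Set.MapsTo T Kᗮ Kᗮ := fun v hv u hu => by
  rw [← hT u v]
  exact hv (T u) (hK hu)

structure IsAlmostContactMetric (f : V →ₗ[ℝ] V) (ξ : V) : Prop where
  norm_eq_one : ‖ξ‖ = 1
  apply_apply : ∀ X, f (f X) = -X + ⟪ξ, X⟫ • ξ
  apply_xi : f ξ = 0
  inner_apply_apply : ∀ X Y, ⟪f X, f Y⟫ = ⟪X, Y⟫ - ⟪ξ, X⟫ * ⟪ξ, Y⟫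

namespace IsAlmostContactMetric

variable {f : V →ₗ[ℝ] V} {ξ : V}

/-- Apply `f` to `f² X = −X + η(X) ξ`: both sides compute `f³ X`. -/
theorem inner_xi_apply (h : IsAlmostContactMetric f ξ) (X : V) : ⟪ξ, f X⟫ = 0 := by
  have hξ : ξ ≠ 0 := norm_ne_zero_iff.mp (h.norm_eq_one ▸ one_ne_zero)
  have h3 := congrArg f (h.apply_apply X)
  rw [map_add, map_neg, map_smul, h.apply_xi, smul_zero, add_zero, h.apply_apply] at h3
  exact (smul_eq_zero.mp (add_eq_left.mp h3)).resolve_right hξ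

theorem inner_apply_left (h : IsAlmostContactMetric f ξ) (X Y : V) : ⟪f X, Y⟫ = -⟪X, f Y⟫ := by
  have hm := h.inner_apply_apply X (f Y)
  rw [h.apply_apply, inner_add_right, inner_neg_right, real_inner_smul_right,
    real_inner_comm ξ (f X), h.inner_xi_apply, h.inner_xi_apply] at hm
  linarith

end IsAlmostContactMetric

namespace ACMS3

variable (S : ACMS3 V)

theorem isAlmostContactMetric : IsAlmostContactMetric S.phi S.xi :=
  ⟨S.xi_unit, S.phi_sq, S.phi_xi, S.phi_metric⟩

theorem isAlmostContactMetric_phiA (a : Fin 3) : IsAlmostContactMetric (S.phiA a) (S.xiA a) :=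
  ⟨S.xiA_unit a, S.phiA_sq a, S.phiA_xiA a, S.phiA_metric a⟩

theorem theta_apply (a : Fin 3) (X : V) :
    S.theta a X = S.phiA a (S.phi X) - ⟪S.xi, X⟫ • S.xiA a := rfl

theorem theta_apply_eq_phi_phiA (a : Fin 3) (X : V) :
    S.theta a X = S.phi (S.phiA a X) - ⟪S.xiA a, X⟫ • S.xi := S.rel a X

theorem theta_isSymmetric (a : Fin 3) : (S.theta a).IsSymmetric := fun X Y => by
  rw [theta_apply, theta_apply_eq_phi_phiA, inner_sub_left, inner_sub_right,
    (S.isAlmostContactMetric_phiA a).inner_apply_left, S.isAlmostContactMetric.inner_apply_left,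
    real_inner_smul_left, real_inner_smul_right, real_inner_comm X S.xi]
  ring

theorem phiA_xiA_eq_smul (a b : Fin 3) : ∃ c, ∃ s : ℝ, S.phiA a (S.xiA b) = s • S.xiA c := by
  obtain ⟨d, rfl⟩ : ∃ d, b = a + d := ⟨b - a, by abel⟩
  fin_cases d
  · exact ⟨a, 0, by simp [S.phiA_xiA]⟩
  · exact ⟨a + 2, 1, by simpa using S.quat_xi1 a⟩
  · refine ⟨a + 1, -1, ?_⟩
    have h := S.quat_xi2 (a + 2)
    simp only [add_assoc, show (2 + 2 : Fin 3) = 1 from rfl, show (2 + 1 : Fin 3) = 0 from rfl,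
      add_zero] at h
    rw [h, neg_one_smul, neg_neg]
    rfl

theorem xi_mem_Hperp : S.xi ∈ S.Hperp := Submodule.subset_span (by simp)

theorem xiA_mem_Hperp (b : Fin 3) : S.xiA b ∈ S.Hperp := by
  fin_cases b <;> exact Submodule.subset_span (by simp)

theorem phi_xiA_mem_Hperp (b : Fin 3) : S.phi (S.xiA b) ∈ S.Hperp := by
  fin_cases b <;> exact Submodule.subset_span (by simp)

theorem mapsTo_theta_Hperp (a : Fin 3) : Set.MapsTo (S.theta a) S.Hperp S.Hperp := by
  have hxi : S.theta a S.xi ∈ S.Hperp := by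
    rw [theta_apply, S.phi_xi, map_zero, zero_sub]
    exact neg_mem (Submodule.smul_mem _ _ (S.xiA_mem_Hperp a))
  have hxiA (b : Fin 3) : S.theta a (S.xiA b) ∈ S.Hperp := by
    obtain ⟨c, s, hc⟩ := S.phiA_xiA_eq_smul a b
    rw [theta_apply_eq_phi_phiA, hc, map_smul]
    exact sub_mem (Submodule.smul_mem _ _ (S.phi_xiA_mem_Hperp c))
      (Submodule.smul_mem _ _ S.xi_mem_Hperp)
  have hphi_xiA (b : Fin 3) : S.theta a (S.phi (S.xiA b)) ∈ S.Hperp := by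
    obtain ⟨c, s, hc⟩ := S.phiA_xiA_eq_smul a b
    rw [theta_apply, S.phi_sq, map_add, map_neg, map_smul, ← S.rel_xi, hc,
      S.isAlmostContactMetric.inner_xi_apply, zero_smul, sub_zero]
    exact add_mem (neg_mem (Submodule.smul_mem _ _ (S.xiA_mem_Hperp c)))
      (Submodule.smul_mem _ _ (S.phi_xiA_mem_Hperp a))
  intro v hv
  refine (Submodule.span_le (p := S.Hperp.comap (S.theta a))).mpr ?_ hv
  simp only [Set.insert_subset_iff, Set.singleton_subset_iff, SetLike.mem_coe,
    Submodule.mem_comap]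
  exact ⟨hxi, hxiA 0, hxiA 1, hxiA 2, hphi_xiA 0, hphi_xiA 1, hphi_xiA 2⟩

theorem mapsTo_theta_H (a : Fin 3) : Set.MapsTo (S.theta a) S.H S.H :=
  (S.theta_isSymmetric a).mapsTo_orthogonal (S.mapsTo_theta_Hperp a)

theorem theta_theta_of_mem_H (a : Fin 3) {X : V} (hX : X ∈ S.H) :
    S.theta a (S.theta a X) = X := by
  have hxi : ⟪S.xi, X⟫ = 0 := hX _ S.xi_mem_Hperp
  have hxiA : ⟪S.xiA a, S.theta a X⟫ = 0 := S.mapsTo_theta_H a hX _ (S.xiA_mem_Hperp a)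
  have hxiA_phi : ⟪S.xiA a, S.phi X⟫ = 0 := by
    rw [← neg_eq_zero, ← S.isAlmostContactMetric.inner_apply_left]
    exact hX _ (S.phi_xiA_mem_Hperp a)
  have hphiA : S.phiA a (S.theta a X) = -S.phi X := by
    rw [theta_apply, hxi, zero_smul, sub_zero, S.phiA_sq, hxiA_phi, zero_smul, add_zero]
  rw [theta_apply_eq_phi_phiA, hphiA, hxiA, zero_smul, sub_zero, map_neg, S.phi_sq, hxi,
    zero_smul, add_zero, neg_neg]

end ACMS3

theorem theta_restrict_H_general (S : ACMS3 V) (a : Fin 3) :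
    (∀ X ∈ S.H, S.theta a X ∈ S.H) ∧
    (∀ X ∈ S.H, S.theta a (S.theta a X) = X) ∧
    (∀ X ∈ S.H, ∀ Y ∈ S.H, ⟪S.theta a X, Y⟫ = ⟪X, S.theta a Y⟫) ∧
    (∀ (ε : ℝ) (X : V), X ∈ S.H → X ≠ 0 → S.theta a X = ε • X → ε = 1 ∨ ε = -1) ∧
    (∀ x ∈ S.eigenH a 1, ∀ y ∈ S.eigenH a (-1), ⟪x, y⟫ = 0) ∧
    S.eigenH a 1 ⊔ S.eigenH a (-1) = S.H := by
  have hmaps := S.mapsTo_theta_H a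
  have hinv := fun X (hX : X ∈ S.H) => S.theta_theta_of_mem_H a hX
  have hsymm := S.theta_isSymmetric a
  refine ⟨fun X hX => hmaps hX, hinv, fun X _ Y _ => hsymm X Y, ?_, ?_,
    Module.End.inf_eigenspace_one_sup_inf_eigenspace_neg_one hmaps hinv⟩
  · exact fun ε X hX hX0 hε =>
      Module.End.eq_one_or_eq_neg_one_of_apply_apply_eq_self (hinv X hX) hX0 hε
  · exact fun x hx y hy =>
      (hsymm.orthogonalFamily_eigenspaces.isOrtho (by norm_num)).inner_eq hx.2 hy.2

/-- For each `a ∈ {1,2,3}`, the subspace `H` is invariant under `θ_a` and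
`θ_a² X = X` for all `X ∈ H`; consequently the restriction `θ_a|_H` is a symmetric involution
whose only possible eigenvalues are `1` and `−1`, and `H` is the orthogonal direct sum of the
eigenspaces `H_a(1)` and `H_a(−1)`. -/
theorem theta_restrict_H [FiniteDimensional ℝ V] (S : ACMS3 V) (a : Fin 3) :
    (∀ X ∈ S.H, S.theta a X ∈ S.H) ∧
    (∀ X ∈ S.H, S.theta a (S.theta a X) = X) ∧
    (∀ X ∈ S.H, ∀ Y ∈ S.H, ⟪S.theta a X, Y⟫ = ⟪X, S.theta a Y⟫) ∧
    (∀ (ε : ℝ) (X : V), X ∈ S.H → X ≠ 0 → S.theta a X = ε • X → ε = 1 ∨ ε = -1) ∧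
    (∀ x ∈ S.eigenH a 1, ∀ y ∈ S.eigenH a (-1), ⟪x, y⟫ = 0) ∧
    S.eigenH a 1 ⊔ S.eigenH a (-1) = S.H :=
  theta_restrict_H_general S a
end

section
/- Let V be a real inner product space, S a symmetric endomorphism of V, f ∈ ℝ, and R : V × V → End(V) a map satisfying the pseudo-parallelism identity R(X,Y)∘S − S∘R(X,Y) = f·((X∧Y)∘S − S∘(X∧Y)) for all X, Y ∈ V. If Z, W ∈ V are eigenvectors of S with eigenvalues λ and μ respectively and λ ≠ μ, then ⟨R(X,Y)Z, W⟩ = f·(⟨Y,Z⟩⟨X,W⟩ − ⟨X,Z⟩⟨Y,W⟩) for all X, Y ∈ V. -/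
open RealInnerProductSpace

noncomputable def wedge {V : Type*} [NormedAddCommGroup V] [InnerProductSpace ℝ V]
    (X Y Z : V) : V :=
  ⟪Y, Z⟫ • X - ⟪X, Z⟫ • Y

/-!
Pseudo-parallelism says exactly that `T := R(X,Y) − f·(X∧Y)` commutes with `S`. A map commuting
with `S` preserves its eigenspaces, so `T Z` lies in the `λ`-eigenspace, which is orthogonal to the
`μ`-eigenspace containing `W`. Hence `⟨T Z, W⟩ = 0`, i.e. `⟨R(X,Y)Z, W⟩ = f·⟨(X∧Y)Z, W⟩`.
-/

section

variable {V : Type*} [NormedAddCommGroup V] [InnerProductSpace ℝ V]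

noncomputable def wedgeₗ (X Y : V) : V →ₗ[ℝ] V :=
  (innerₛₗ ℝ Y).smulRight X - (innerₛₗ ℝ X).smulRight Y

@[simp]
theorem wedgeₗ_apply (X Y Z : V) : wedgeₗ X Y Z = wedge X Y Z := rfl

theorem inner_wedge_left (X Y Z W : V) :
    ⟪wedge X Y Z, W⟫ = ⟪Y, Z⟫ * ⟪X, W⟫ - ⟪X, Z⟫ * ⟪Y, W⟫ := by
  simp only [wedge, inner_sub_left, real_inner_smul_left]

theorem LinearMap.IsSymmetric.inner_eq_zero_of_commute_of_eigenvalue_ne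
    {S T : V →ₗ[ℝ] V} (hS : S.IsSymmetric) {Z W : V} {lam mu : ℝ}
    (hT : T (S Z) = S (T Z)) (hZ : S Z = lam • Z) (hW : S W = mu • W) (hne : lam ≠ mu) :
    ⟪T Z, W⟫ = 0 := by
  have hTZ : T Z ∈ Module.End.eigenspace S lam := by
    rw [Module.End.mem_eigenspace_iff, ← hT, hZ, map_smul]
  have hW' : W ∈ Module.End.eigenspace S mu := Module.End.mem_eigenspace_iff.mpr hW
  exact hS.orthogonalFamily_eigenspaces hne ⟨T Z, hTZ⟩ ⟨W, hW'⟩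

end

/-- Let `V` be a real inner product space, `S` a symmetric endomorphism of `V`,
`f ∈ ℝ`, and `R : V × V → End(V)` a map satisfying the pseudo-parallelism identity
`R(X,Y)∘S − S∘R(X,Y) = f·((X∧Y)∘S − S∘(X∧Y))` for all `X, Y ∈ V`.  If `Z, W ∈ V` are
eigenvectors of `S` with eigenvalues `λ` and `μ` respectively and `λ ≠ μ`, then
`⟨R(X,Y)Z, W⟩ = f·(⟨Y,Z⟩⟨X,W⟩ − ⟨X,Z⟩⟨Y,W⟩)` for all `X, Y ∈ V`. -/
theorem pseudoparallel_inner_eigenvectors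
    {V : Type*} [NormedAddCommGroup V] [InnerProductSpace ℝ V]
    (S : V →ₗ[ℝ] V) (hS : ∀ X Y : V, ⟪S X, Y⟫ = ⟪X, S Y⟫) (f : ℝ)
    (R : V → V → (V →ₗ[ℝ] V))
    (hpp : ∀ X Y Z : V,
      R X Y (S Z) - S (R X Y Z) = f • (wedge X Y (S Z) - S (wedge X Y Z)))
    (Z W : V) (lam mu : ℝ) (hZ : S Z = lam • Z) (hW : S W = mu • W) (hne : lam ≠ mu) :
    ∀ X Y : V, ⟪R X Y Z, W⟫ = f * (⟪Y, Z⟫ * ⟪X, W⟫ - ⟪X, Z⟫ * ⟪Y, W⟫) := by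
  intro X Y
  have hcomm : (R X Y - f • wedgeₗ X Y) (S Z) = S ((R X Y - f • wedgeₗ X Y) Z) := by
    simp only [LinearMap.sub_apply, LinearMap.smul_apply, wedgeₗ_apply, map_sub, map_smul]
    rw [← sub_eq_zero, ← sub_eq_zero.mpr (hpp X Y Z), smul_sub]
    abel
  have horth := LinearMap.IsSymmetric.inner_eq_zero_of_commute_of_eigenvalue_ne
    hS hcomm hZ hW hne
  rwa [LinearMap.sub_apply, LinearMap.smul_apply, wedgeₗ_apply, inner_sub_left,
    real_inner_smul_left, inner_wedge_left, sub_eq_zero] at horth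
end
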